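/- arXiv:2001.11260 — 2 statements merged into one kernel-verified Lean document; each statement's English description precedes it below -/
import Mathlib

section
/- For every n ≥ 1 and complex numbers z₁,…,z_n, w₁,…,w_n such that zⱼ ≠ 0, wᵢ·zⱼ ≠ 1 and wᵢ ≠ zⱼ for all i, j, one has det[ 1/((1 − wᵢzⱼ)(1 − wᵢ/zⱼ)) ]_{1≤i,j≤n} = ( Π_{1≤i<j≤n} (zᵢ − zⱼ)(wᵢ − wⱼ)(1 − wᵢwⱼ)(1 − 1/(zᵢzⱼ)) ) / ( Π_{i=1}^n Π_{j=1}^n (1 − wᵢzⱼ)(1 − wᵢ/zⱼ) ). -/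
open scoped BigOperators
open Filter

/-- An integer partition: a weakly decreasing sequence of naturals, eventually zero.
`f i` is the `(i+1)`-st part `λ_{i+1}` (zero-indexed); parts beyond the length are `0`. -/
structure Partn where
  f : ℕ → ℕ
  antitone : ∀ ⦃i j : ℕ⦄, i ≤ j → f j ≤ f i
  finsupp : ∃ N, ∀ i, N ≤ i → f i = 0

namespace Partn

/-- The length `ℓ(λ)`: the number of nonzero parts. -/
noncomputable def len (lam : Partn) : ℕ := sInf {N | lam.f N = 0}

/-- The size `|λ|`. -/
noncomputable def size (lam : Partn) : ℕ := ∑ i ∈ Finset.range lam.len, lam.f i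

/-- The conjugate partition: `conj lam i = λ'_{i+1} = #{j : λ_j ≥ i+1}` (zero-indexed). -/
noncomputable def conj (lam : Partn) (i : ℕ) : ℕ :=
  ((Finset.range lam.len).filter fun j => i < lam.f j).card

/-- The Frobenius rank `d(λ) = #{i ≥ 1 : λ_i ≥ i}`. -/
noncomputable def frobDiag (lam : Partn) : ℕ :=
  ((Finset.range lam.len).filter fun i => i < lam.f i).card

/-- Membership in the set `A`: Frobenius coordinates `(a₁,…,a_d | a₁+1,…,a_d+1)`,
i.e. `λ'_i = λ_i + 1` for `1 ≤ i ≤ d(λ)`. -/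
def InA (lam : Partn) : Prop := ∀ i < lam.frobDiag, lam.conj i = lam.f i + 1

/-- Membership in the set `B`: Frobenius coordinates `(b₁+1,…,b_d+1 | b₁,…,b_d)`,
i.e. `λ_i = λ'_i + 1` for `1 ≤ i ≤ d(λ)`. -/
def InB (lam : Partn) : Prop := ∀ i < lam.frobDiag, lam.f i = lam.conj i + 1

/-- The cells of the Young diagram of `λ` (zero-indexed): `(i,j)` with `j < λ_{i+1}`. -/
noncomputable def cells (lam : Partn) : Finset (ℕ × ℕ) :=
  (Finset.range lam.len ×ˢ Finset.range (lam.f 0)).filter fun p => p.2 < lam.f p.1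

/-- `dim λ`: the number of standard Young tableaux of shape `λ`, i.e. fillings of the
diagram with `1, …, |λ|`, each used exactly once, strictly increasing along rows and columns. -/
noncomputable def dim (lam : Partn) : ℕ :=
  Nat.card {T : ℕ × ℕ → ℕ //
    Set.BijOn T (lam.cells : Set (ℕ × ℕ)) (Set.Icc 1 lam.size) ∧
    (∀ p, p ∉ lam.cells → T p = 0) ∧
    (∀ i j j', (i, j) ∈ lam.cells → (i, j') ∈ lam.cells → j < j' → T (i, j) < T (i, j')) ∧
    (∀ i i' j, (i, j) ∈ lam.cells → (i', j) ∈ lam.cells → i < i' → T (i, j) < T (i', j))}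

end Partn

/-- The complete homogeneous coefficients `h_n(ρ)` of a specialization `ρ` given by its
power sums `p : ℕ → ℂ` (only `p k`, `k ≥ 1`, is used): the coefficients of
`H(ρ;z) = exp (∑_{k ≥ 1} p_k z^k / k) = ∑_{n ≥ 0} h_n z^n`, characterized by `h_0 = 1` and the
Newton-type recursion `(n+1)·h_{n+1} = ∑_{k=0}^{n} p_{k+1} h_{n-k}`. -/
noncomputable def hcf (p : ℕ → ℂ) : ℕ → ℂ
  | 0 => 1
  | n + 1 => ((n : ℂ) + 1)⁻¹ * ∑ k ∈ Finset.range (n + 1), p (k + 1) * hcf p (n - k)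
decreasing_by exact Nat.lt_succ_of_le (Nat.sub_le n k)

/-- `h_k(ρ)` for integer `k`, with `h_k = 0` for `k < 0`. -/
noncomputable def hz (p : ℕ → ℂ) (k : ℤ) : ℂ := if k < 0 then 0 else hcf p k.toNat

/-- The Schur function `s_λ(ρ) = det[h_{λ_i - i + j}]_{1 ≤ i,j ≤ ℓ(λ)}`. -/
noncomputable def schur (p : ℕ → ℂ) (lam : Partn) : ℂ :=
  Matrix.det (Matrix.of fun i j : Fin lam.len =>
    hz p ((lam.f i.val : ℤ) - (i.val : ℤ) + (j.val : ℤ)))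

/-- The (lifted) symplectic character
`sp_λ(ρ) = (1/2)·det[h_{λ_i - i + j} + h_{λ_i - i - j + 2}]_{1 ≤ i,j ≤ ℓ(λ)}`, equal to 1 for
the empty partition.  (Zero-indexed, the second entry index is `λ_i - i - j`.) -/
noncomputable def spChar (p : ℕ → ℂ) (lam : Partn) : ℂ :=
  if lam.len = 0 then 1 else
    (1 / 2 : ℂ) * Matrix.det (Matrix.of fun i j : Fin lam.len =>
      hz p ((lam.f i.val : ℤ) - (i.val : ℤ) + (j.val : ℤ)) +
      hz p ((lam.f i.val : ℤ) - (i.val : ℤ) - (j.val : ℤ)))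

/-- The (lifted) orthogonal character
`o_λ(ρ) = det[h_{λ_i - i + j} - h_{λ_i - i - j}]_{1 ≤ i,j ≤ ℓ(λ)}`, equal to 1 for
the empty partition. (Zero-indexed, the second entry index is `λ_i - i - j - 2`.) -/
noncomputable def oChar (p : ℕ → ℂ) (lam : Partn) : ℂ :=
  Matrix.det (Matrix.of fun i j : Fin lam.len =>
    hz p ((lam.f i.val : ℤ) - (i.val : ℤ) + (j.val : ℤ)) -
    hz p ((lam.f i.val : ℤ) - (i.val : ℤ) - (j.val : ℤ) - 2))

/-- `H(ρ; z) = exp (∑_{k ≥ 1} p_k(ρ) z^k / k)`. -/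
noncomputable def Hfun (p : ℕ → ℂ) (z : ℂ) : ℂ :=
  Complex.exp (∑' k : ℕ, p (k + 1) * z ^ (k + 1) / ((k : ℂ) + 1))

/-- `F(z) = H(ρ⁺;z) / (H(ρ⁻;z) H(ρ⁻;1/z))`. -/
noncomputable def Ffun (pp pm : ℕ → ℂ) (z : ℂ) : ℂ :=
  Hfun pp z / (Hfun pm z * Hfun pm z⁻¹)

/-- `Z_sp = exp ∑_{k ≥ 1} ( p_k(ρ⁺)p_k(ρ⁻)/k + p_{2k}(ρ⁻)/(2k) − p_k(ρ⁻)²/(2k) )`. -/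
noncomputable def Zsp (pp pm : ℕ → ℂ) : ℂ :=
  Complex.exp (∑' k : ℕ,
    (pp (k + 1) * pm (k + 1) / ((k : ℂ) + 1) + pm (2 * (k + 1)) / (2 * ((k : ℂ) + 1))
      - pm (k + 1) ^ 2 / (2 * ((k : ℂ) + 1))))

/-- `Z_o = exp ∑_{k ≥ 1} ( p_k(ρ⁺)p_k(ρ⁻)/k − p_{2k}(ρ⁻)/(2k) − p_k(ρ⁻)²/(2k) )`. -/
noncomputable def Zo (pp pm : ℕ → ℂ) : ℂ :=
  Complex.exp (∑' k : ℕ,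
    (pp (k + 1) * pm (k + 1) / ((k : ℂ) + 1) - pm (2 * (k + 1)) / (2 * ((k : ℂ) + 1))
      - pm (k + 1) ^ 2 / (2 * ((k : ℂ) + 1))))

/-- The symplectic correlation kernel `K_sp(a + 1/2, b + 1/2)` for `a, b ∈ ℤ`
(half-integer points are parametrized as `a + 1/2`, `a ∈ ℤ`), with contour radii `Rz, Rw`:
`K_sp = (2πi)⁻² ∮∮ (F(z)/F(w)) (1−w²)/((1−wz)(1−w/z)) z^{−(a+1/2)−3/2} w^{(b+1/2)−1/2} dz dw`. -/
noncomputable def Ksp (pp pm : ℕ → ℂ) (Rz Rw : ℝ) (a b : ℤ) : ℂ :=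
  ((2 * Real.pi * Complex.I)⁻¹) ^ 2 *
    ∮ z in C(0, Rz), ∮ w in C(0, Rw),
      Ffun pp pm z / Ffun pp pm w * ((1 - w ^ 2) / ((1 - w * z) * (1 - w / z))) *
        z ^ (-a - 2) * w ^ b

/-- The orthogonal correlation kernel `K_o(a + 1/2, b + 1/2)` for `a, b ∈ ℤ`. -/
noncomputable def Ko (pp pm : ℕ → ℂ) (Rz Rw : ℝ) (a b : ℤ) : ℂ :=
  ((2 * Real.pi * Complex.I)⁻¹) ^ 2 *
    ∮ z in C(0, Rz), ∮ w in C(0, Rw),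
      Ffun pp pm z / Ffun pp pm w * ((1 - z ^ 2) / ((1 - w * z) * (1 - w / z))) *
        z ^ (-a - 2) * w ^ b

/-- The Laurent coefficients `f_k = ∑_{j ≥ max(0,−k)} h_{k+j}(ρ⁺) h_j(ρ⁻)` of the symbol
`f(z) = H(ρ⁺;z)·H(ρ⁻;1/z)`. -/
noncomputable def fcoef (pp pm : ℕ → ℂ) (k : ℤ) : ℂ :=
  ∑' j : ℕ, hz pp (k + (j : ℤ)) * hcf pm j

/-- The symbol `f(z) = H(ρ⁺;z)·H(ρ⁻;1/z)`. -/
noncomputable def symb (pp pm : ℕ → ℂ) (z : ℂ) : ℂ := Hfun pp z * Hfun pm z⁻¹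

/-- The Laurent coefficients `f̌_k` of `f̌(z) = 1/f(−z)`, computed on the circle `|z| = R`:
`f̌_k = (2πi)⁻¹ ∮_{|z|=R} f̌(z) z^{−k−1} dz`. -/
noncomputable def fcheck (pp pm : ℕ → ℂ) (R : ℝ) (k : ℤ) : ℂ :=
  (2 * Real.pi * Complex.I)⁻¹ * ∮ z in C(0, R), (symb pp pm (-z))⁻¹ * z ^ (-k - 1)

/-- The Plancherel specialization `pl_θ`: `p_1 = θ`, `p_k = 0` for `k ≥ 2`. -/
noncomputable def plSpec (θ : ℝ) : ℕ → ℂ := fun k => if k = 1 then (θ : ℂ) else 0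

/-- The Airy function `Ai(x) = (1/π)·lim_{T→∞} ∫₀^T cos(t³/3 + xt) dt`. -/
noncomputable def Ai (x : ℝ) : ℝ :=
  (1 / Real.pi) * limUnder Filter.atTop
    (fun T : ℝ => ∫ t in (0 : ℝ)..T, Real.cos (t ^ 3 / 3 + x * t))

/-- The Airy `2→1` kernel `A₊(x,y) = ∫₀^∞ Ai(x+t)Ai(y+t) dt + ∫₀^∞ Ai(x−t)Ai(y+t) dt`. -/
noncomputable def Aplus (x y : ℝ) : ℝ :=
  (∫ t in Set.Ioi (0 : ℝ), Ai (x + t) * Ai (y + t)) +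
    ∫ t in Set.Ioi (0 : ℝ), Ai (x - t) * Ai (y + t)

/-- The dual kernel `A₋(x,y) = ∫₀^∞ Ai(x+t)Ai(y+t) dt − ∫₀^∞ Ai(x−t)Ai(y+t) dt`. -/
noncomputable def Aminus (x y : ℝ) : ℝ :=
  (∫ t in Set.Ioi (0 : ℝ), Ai (x + t) * Ai (y + t)) -
    ∫ t in Set.Ioi (0 : ℝ), Ai (x - t) * Ai (y + t)

/-- The Airy kernel `K_Ai(x,y) = ∫₀^∞ Ai(x+t)Ai(y+t) dt`. -/
noncomputable def KAiry (x y : ℝ) : ℝ :=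
  ∫ t in Set.Ioi (0 : ℝ), Ai (x + t) * Ai (y + t)

/-- The Fredholm determinant `det(1−K)_{L²(s,∞)}
= ∑_{n≥0} ((−1)^n/n!) ∫_{(s,∞)^n} det[K(xᵢ,xⱼ)] dx`. -/
noncomputable def fredholmDet (K : ℝ → ℝ → ℝ) (s : ℝ) : ℝ :=
  ∑' n : ℕ, ((-1 : ℝ) ^ n / (n.factorial : ℝ)) *
    ∫ x in (Set.univ.pi fun _ : Fin n => Set.Ioi s),
      Matrix.det (Matrix.of fun i j : Fin n => K (x i) (x j))

/-!
Since `(1 - w z)(1 - w / z) = (1 + w²) - w (z + z⁻¹)`, the matrix is a Cauchy-type matrix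
`((sᵢ - tᵢ uⱼ)⁻¹)` with `s = 1 + w²`, `t = w`, `u = z + z⁻¹`. One step of Gaussian elimination
on such a matrix leaves, after scaling rows and columns, a Cauchy-type matrix of the same shape,
because `dᵢ₀ d₀ⱼ - d₀₀ dᵢⱼ = (t₀ sᵢ - tᵢ s₀)(u₀ - uⱼ)` for `dᵢⱼ = sᵢ - tᵢ uⱼ`; this gives
`det = ∏_{i<j} (tᵢ sⱼ - tⱼ sᵢ)(uᵢ - uⱼ) / ∏_{i,j} dᵢⱼ` by induction. Finally
`wᵢ (1 + wⱼ²) - wⱼ (1 + wᵢ²) = (wᵢ - wⱼ)(1 - wᵢ wⱼ)` and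
`(zᵢ + zᵢ⁻¹) - (zⱼ + zⱼ⁻¹) = (zᵢ - zⱼ)(1 - 1 / (zᵢ zⱼ))`.
-/

open Finset Matrix

theorem Matrix.det_succ_eq_mul_det_schur {K : Type*} [Field K] {n : ℕ}
    (A : Matrix (Fin (n + 1)) (Fin (n + 1)) K) (hA : A 0 0 ≠ 0) :
    A.det = A 0 0 * det (of fun i j : Fin n =>
      A i.succ j.succ - A i.succ 0 / A 0 0 * A 0 j.succ) := by
  let B : Matrix (Fin (n + 1)) (Fin (n + 1)) K :=
    of fun i j => if i = 0 then A 0 j else A i j - A i 0 / A 0 0 * A 0 j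
  have hAB : A.det = B.det := by
    refine det_eq_of_forall_row_eq_smul_add_const (fun i => if i = 0 then 0 else A i 0 / A 0 0)
      0 (if_pos rfl) fun i j => ?_
    by_cases hi : i = 0 <;> simp [B, hi]
  have hB : ∀ i : Fin n, B i.succ 0 = 0 := fun i => by
    simp [B, Fin.succ_ne_zero, div_mul_cancel₀ _ hA]
  rw [hAB, det_succ_column_zero, Fin.sum_univ_succ]
  simp only [hB, mul_zero, zero_mul, sum_const_zero, add_zero]
  simp [B, submatrix, Fin.succ_ne_zero]

theorem Matrix.det_of_mul_mul {R ι : Type*} [CommRing R] [Fintype ι] [DecidableEq ι]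
    (a b : ι → R) (M : ι → ι → R) :
    det (of fun i j => a i * (b j * M i j)) = (∏ i, a i) * (∏ j, b j) * det (of M) := by
  have : of (fun i j => a i * (b j * M i j)) = diagonal a * of M * diagonal b := by
    ext i j
    simp [mul_comm, mul_left_comm]
  rw [this, det_mul, det_mul, det_diagonal, det_diagonal, mul_right_comm]

theorem Fin.prod_prod_Ioi_succ {M : Type*} [CommMonoid M] {n : ℕ}
    (f : Fin (n + 1) → Fin (n + 1) → M) :
    ∏ i, ∏ j ∈ Ioi i, f i j =
      (∏ j : Fin n, f 0 j.succ) * ∏ i : Fin n, ∏ j ∈ Ioi i, f i.succ j.succ := by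
  rw [Fin.prod_univ_succ, Fin.prod_Ioi_zero]
  simp_rw [Fin.prod_Ioi_succ]

theorem Matrix.det_generalized_cauchy {K : Type*} [Field K] :
    ∀ {n : ℕ} (s t u : Fin n → K), (∀ i j, s i - t i * u j ≠ 0) →
    det (of fun i j : Fin n => (s i - t i * u j)⁻¹) =
      (∏ i, ∏ j ∈ Ioi i, (t i * s j - t j * s i) * (u i - u j)) / ∏ i, ∏ j, (s i - t i * u j)
  | 0, _, _, _, _ => by simp
  | n + 1, s, t, u, hd => by
    set d : Fin (n + 1) → Fin (n + 1) → K := fun i j => s i - t i * u j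
    have ih : det (of fun i j : Fin n => (d i.succ j.succ)⁻¹) =
        (∏ i : Fin n, ∏ j ∈ Ioi i, (t i.succ * s j.succ - t j.succ * s i.succ) *
          (u i.succ - u j.succ)) / ∏ i : Fin n, ∏ j : Fin n, d i.succ j.succ :=
      det_generalized_cauchy _ _ _ fun i j => hd i.succ j.succ
    have key : ∀ i j, d i 0 * d 0 j - d 0 0 * d i j = (t 0 * s i - t i * s 0) * (u 0 - u j) :=
      fun i j => by simp only [d]; ring
    change det (of fun i j => (d i j)⁻¹) = _ / ∏ i, ∏ j, d i j
    replace hd : ∀ i j, d i j ≠ 0 := hd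
    -- keeps the final `ring` from unfolding `d`
    clear_value d
    have schur_entry : ∀ i j : Fin n,
        (d i.succ j.succ)⁻¹ - (d i.succ 0)⁻¹ / (d 0 0)⁻¹ * (d 0 j.succ)⁻¹ =
          ((t 0 * s i.succ - t i.succ * s 0) / d i.succ 0) *
            ((u 0 - u j.succ) / d 0 j.succ * (d i.succ j.succ)⁻¹) := fun i j => by
      rw [inv_div_inv]
      field_simp [hd]
      linear_combination key i.succ j.succ
    have hnum : ∏ i, ∏ j ∈ Ioi i, (t i * s j - t j * s i) * (u i - u j) =
        (∏ j : Fin n, (t 0 * s j.succ - t j.succ * s 0)) * (∏ j : Fin n, (u 0 - u j.succ)) *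
          ∏ i : Fin n, ∏ j ∈ Ioi i, (t i.succ * s j.succ - t j.succ * s i.succ) *
            (u i.succ - u j.succ) := by
      rw [Fin.prod_prod_Ioi_succ, prod_mul_distrib]
    have hden : ∏ i, ∏ j, d i j =
        d 0 0 * (∏ j : Fin n, d 0 j.succ) * ((∏ i : Fin n, d i.succ 0) *
          ∏ i : Fin n, ∏ j : Fin n, d i.succ j.succ) := by
      simp only [Fin.prod_univ_succ, prod_mul_distrib]
      ring
    rw [det_succ_eq_mul_det_schur _ (inv_ne_zero (hd 0 0))]
    simp only [of_apply, schur_entry]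
    rw [det_of_mul_mul, ih, hnum, hden, prod_div_distrib, prod_div_distrib]
    ring

theorem symplectic_cauchy_determinant_general (n : ℕ) (z w : Fin n → ℂ)
    (hz0 : ∀ j, z j ≠ 0) (hwz : ∀ i j, w i * z j ≠ 1) (hwz' : ∀ i j, w i ≠ z j) :
    Matrix.det (Matrix.of fun i j : Fin n => ((1 - w i * z j) * (1 - w i / z j))⁻¹) =
      (∏ i : Fin n, ∏ j ∈ Finset.Ioi i,
          (z i - z j) * (w i - w j) * (1 - w i * w j) * (1 - 1 / (z i * z j))) /
        ∏ i : Fin n, ∏ j : Fin n, (1 - w i * z j) * (1 - w i / z j) := by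
  have hfactor : ∀ i j, (1 - w i * z j) * (1 - w i / z j) =
      (1 + w i ^ 2) - w i * (z j + (z j)⁻¹) := fun i j => by
    field_simp [hz0 j]
    ring
  have hd : ∀ i j, (1 + w i ^ 2) - w i * (z j + (z j)⁻¹) ≠ 0 := fun i j => by
    rw [← hfactor]
    exact mul_ne_zero (sub_ne_zero.mpr (hwz i j).symm)
      (sub_ne_zero.mpr fun h => hwz' i j ((div_eq_one_iff_eq (hz0 j)).mp h.symm))
  simp_rw [hfactor]
  rw [det_generalized_cauchy _ _ _ hd]
  congr 1
  refine prod_congr rfl fun i _ => prod_congr rfl fun j _ => ?_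
  field_simp [hz0 i, hz0 j]
  ring

/-- The symplectic analogue of the Cauchy determinant evaluation. -/
theorem symplectic_cauchy_determinant (n : ℕ) (hn : 1 ≤ n) (z w : Fin n → ℂ)
    (hz0 : ∀ j, z j ≠ 0) (hwz : ∀ i j, w i * z j ≠ 1) (hwz' : ∀ i j, w i ≠ z j) :
    Matrix.det (Matrix.of fun i j : Fin n => ((1 - w i * z j) * (1 - w i / z j))⁻¹) =
      (∏ i : Fin n, ∏ j ∈ Finset.Ioi i,
          (z i - z j) * (w i - w j) * (1 - w i * w j) * (1 - 1 / (z i * z j))) /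
        ∏ i : Fin n, ∏ j : Fin n, (1 - w i * z j) * (1 - w i / z j) :=
  symplectic_cauchy_determinant_general n z w hz0 hwz hwz'
end

section
/- Let 0 denote the empty specialization, with p_k(0) = 0 for all k ≥ 1, so that h_0(0) = 1 and h_k(0) = 0 for all k ≠ 0. Then for every partition λ, sp_λ(0) = (−1)^{|λ|/2} if λ ∈ A (in which case |λ| is even), and sp_λ(0) = 0 if λ ∉ A. -/
open scoped BigOperators
open Filter

/-!
Indices start at `0`. With all power sums zero, `h_k = δ_{k,0}`, so row `i` of the matrix
defining `sp_λ(0)` is the unit vector at column `|λ_i - i|`, doubled when `λ_i = i`. The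
determinant therefore vanishes unless `i ↦ |λ_i - i|` permutes `{0, …, ℓ(λ) - 1}`, and is then
twice the sign of that permutation. No hook length `λ_j + λ'_k - j - k - 1` is zero, so the values
`i - λ_i` (`i ≥ d`) never meet the legs `λ'_k - k - 1` (`k < d`); counting shows that the
permutation exists exactly when the arms `λ_i - i` coincide with the legs, i.e. `λ ∈ A`. Its
inversions are then counted by the arms, whose sum is `|λ| / 2`.
-/

theorem Finset.lt_card_filter_range_iff {n i : ℕ} {P : ℕ → Prop} [DecidablePred P]
    (hP : ∀ ⦃i j⦄, i ≤ j → P j → P i) :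
    i < ((Finset.range n).filter P).card ↔ i < n ∧ P i := by
  constructor
  · intro hi
    by_contra h
    have hsub : (Finset.range n).filter P ⊆ Finset.range i := fun j hj => by
      simp only [Finset.mem_filter, Finset.mem_range] at hj ⊢
      by_contra hij
      exact h ⟨by omega, hP (not_lt.mp hij) hj.2⟩
    simpa using hi.trans_le (Finset.card_le_card hsub)
  · rintro ⟨hin, hPi⟩
    have hsub : Finset.range (i + 1) ⊆ (Finset.range n).filter P := fun j hj => by
      simp only [Finset.mem_filter, Finset.mem_range] at hj ⊢
      exact ⟨by omega, hP (by omega) hPi⟩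
    simpa using Finset.card_le_card hsub

theorem StrictAnti.eq_of_range_subset {β γ : Type*} [LinearOrder β] [Finite β] [Preorder γ]
    {u v : β → γ} (hu : StrictAnti u) (hv : StrictAnti v) (h : Set.range v ⊆ Set.range u) :
    u = v :=
  ((hv.range_inj hu).mp <| Set.eq_of_subset_of_ncard_le h <| by
    rw [Set.ncard_range_of_injective hu.injective, Set.ncard_range_of_injective hv.injective]).symm

namespace Equiv.Perm

theorem sign_eq_neg_one_pow_of_strictAntiOn_of_strictMonoOn {n d : ℕ} (σ : Perm (Fin n))
    (hanti : StrictAntiOn σ {i | (i : ℕ) < d}) (hmono : StrictMonoOn σ {i | d ≤ (i : ℕ)}) :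
    sign σ = (-1) ^ ∑ i : Fin n with i.val < d, (σ i : ℕ) := by
  rw [sign_eq_prod_prod_Ioi, Finset.sum_filter, ← Finset.prod_pow_eq_pow_sum]
  refine Finset.prod_congr rfl fun i _ => ?_
  split_ifs with hid
  · rw [Finset.prod_ite, Finset.prod_const_one, one_mul, Finset.prod_const]
    congr 1
    have hinversions : {j ∈ Finset.Ioi i | ¬σ i < σ j} = ({j | σ j < σ i} : Finset (Fin n)) := by
      ext j
      simp only [Finset.mem_filter, Finset.mem_Ioi, Finset.mem_univ, true_and, not_lt]
      constructor
      · rintro ⟨hij, hle⟩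
        exact hle.lt_of_ne (σ.injective.ne hij.ne')
      · intro hlt
        refine ⟨lt_of_not_ge fun hji => ?_, hlt.le⟩
        obtain hji | rfl := hji.lt_or_eq
        · exact (hanti (Fin.lt_def.mp hji |>.trans hid) hid hji).not_gt hlt
        · exact hlt.false
    rw [hinversions, ← Fin.card_Iio, ← Finset.card_map σ.toEmbedding, Finset.map_filter,
      Finset.map_univ_equiv]
    congr 1
    ext u
    simp
  · exact Finset.prod_eq_one fun j hj => if_pos (hmono (not_lt.mp hid)
      (le_trans (not_lt.mp hid) (Finset.mem_Ioi.mp hj).le) (Finset.mem_Ioi.mp hj))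

end Equiv.Perm

theorem Matrix.det_of_ite_perm_eq {n R : Type*} [Fintype n] [DecidableEq n] [CommRing R]
    (σ : Equiv.Perm n) (v : n → R) :
    (Matrix.of fun i j => if σ i = j then v j else 0).det = Equiv.Perm.sign σ * ∏ j, v j := by
  have : (Matrix.of fun i j => if σ i = j then v j else 0) =
      σ.permMatrix R * Matrix.diagonal v := by
    ext i j
    simp [PEquiv.toMatrix_apply]
  rw [this, Matrix.det_mul, Matrix.det_permutation, Matrix.det_diagonal]

namespace Partn

variable (lam : Partn)

theorem lt_len_iff {i : ℕ} : i < lam.len ↔ 0 < lam.f i := by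
  obtain ⟨N, hN⟩ := lam.finsupp
  have hlen : lam.f lam.len = 0 := Nat.sInf_mem (s := {N | lam.f N = 0}) ⟨N, hN N le_rfl⟩
  constructor
  · intro hi
    exact Nat.pos_of_ne_zero fun h => (Nat.sInf_le (show i ∈ {N | lam.f N = 0} from h)).not_gt hi
  · intro hi
    by_contra h
    exact hi.ne' (Nat.le_zero.mp (hlen ▸ lam.antitone (not_lt.mp h)))

theorem lt_conj_iff {j k : ℕ} : j < lam.conj k ↔ k < lam.f j := by
  rw [conj, Finset.lt_card_filter_range_iff fun _ _ h hj => hj.trans_le (lam.antitone h),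
    lt_len_iff]
  exact ⟨And.right, fun h => ⟨(Nat.zero_le k).trans_lt h, h⟩⟩

theorem lt_frobDiag_iff {i : ℕ} : i < lam.frobDiag ↔ i < lam.f i := by
  rw [frobDiag, Finset.lt_card_filter_range_iff
      fun _ _ h hj => (h.trans_lt hj).trans_le (lam.antitone h), lt_len_iff]
  exact ⟨And.right, fun h => ⟨(Nat.zero_le i).trans_lt h, h⟩⟩

theorem conj_le_len (k : ℕ) : lam.conj k ≤ lam.len :=
  (Finset.card_filter_le _ _).trans (Finset.card_range _).le

theorem frobDiag_le_len : lam.frobDiag ≤ lam.len :=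
  (Finset.card_filter_le _ _).trans (Finset.card_range _).le

theorem conj_le_of_frobDiag_le {k : ℕ} (hk : lam.frobDiag ≤ k) : lam.conj k ≤ k := by
  by_contra h
  exact (not_lt.mpr hk) (lam.lt_frobDiag_iff.mpr (lam.lt_conj_iff.mp (not_le.mp h)))

/-- The hook length `λ_j + λ'_k - j - k - 1` of the cell `(j, k)` is positive inside the
diagram and negative outside it, never zero. -/
theorem f_add_conj_ne (j k : ℕ) : lam.f j + lam.conj k ≠ j + k + 1 := by
  by_cases h : k < lam.f j
  · have := lam.lt_conj_iff.mpr h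
    omega
  · have := mt lam.lt_conj_iff.mp h
    omega

theorem conj_antitone : Antitone lam.conj := fun _ _ hkk' =>
  le_of_forall_lt fun _ hj => lam.lt_conj_iff.mpr ((hkk'.trans_lt (lam.lt_conj_iff.mp hj)))

/-- Frobenius' decomposition of the diagram into the arms `λ_i - i` (diagonal cell included)
and the legs `λ'_k - k - 1`; truncated subtraction makes the terms with index `≥ d(λ)` vanish. -/
theorem size_eq_sum_arm_add_sum_leg :
    lam.size = ∑ i ∈ Finset.range lam.len, (lam.f i - i) +
      ∑ k ∈ Finset.range lam.len, (lam.conj k - (k + 1)) := by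
  set n := lam.len
  have hcells : ∑ i ∈ Finset.range n, min (lam.f i) i =
      ∑ k ∈ Finset.range n, (lam.conj k - (k + 1)) := by
    calc ∑ i ∈ Finset.range n, min (lam.f i) i
        = ∑ i ∈ Finset.range n, ((Finset.range n).filter fun k => k < lam.f i ∧ k < i).card := by
          refine Finset.sum_congr rfl fun i hi => ?_
          rw [Finset.mem_range] at hi
          rw [show (Finset.range n).filter (fun k => k < lam.f i ∧ k < i) =
              Finset.range (min (lam.f i) i) by
                ext k; simp only [Finset.mem_filter, Finset.mem_range]; omega,
            Finset.card_range]
      _ = ∑ k ∈ Finset.range n, ((Finset.range n).filter fun i => k < lam.f i ∧ k < i).card := by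
          simp only [Finset.card_filter]
          exact Finset.sum_comm
      _ = ∑ k ∈ Finset.range n, (lam.conj k - (k + 1)) := by
          refine Finset.sum_congr rfl fun k _ => ?_
          have := lam.conj_le_len k
          rw [show (Finset.range n).filter (fun i => k < lam.f i ∧ k < i) =
              Finset.Ico (k + 1) (lam.conj k) by
            ext i; simp only [Finset.mem_filter, Finset.mem_range, Finset.mem_Ico, ← lt_conj_iff]
            omega, Nat.card_Ico]
  rw [size, ← hcells, ← Finset.sum_add_distrib]
  exact Finset.sum_congr rfl fun i _ => by omega

def shifted (i : ℕ) : ℤ := (lam.f i : ℤ) - i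

theorem shifted_strictAnti : StrictAnti lam.shifted := fun i j hij => by
  have := lam.antitone hij.le
  simp only [shifted]
  omega

theorem inA_iff_mapsTo_injOn :
    lam.InA ↔ Set.MapsTo (fun i => (lam.shifted i).natAbs) (Set.Iio lam.len) (Set.Iio lam.len) ∧
      Set.InjOn (fun i => (lam.shifted i).natAbs) (Set.Iio lam.len) := by
  have hd i := lam.lt_frobDiag_iff (i := i)
  have hhook j k := lam.f_add_conj_ne j k
  constructor
  · intro hA
    refine ⟨fun i (hi : i < lam.len) => ?_, fun i (hi : i < lam.len) j (hj : j < lam.len) hij => ?_⟩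
    · have := hd i
      have := lam.conj_le_len i
      have := hA i
      simp only [Set.mem_Iio, shifted]
      omega
    · have := hd i; have := hd j; have := hhook i j; have := hhook j i
      simp only [shifted] at hij
      by_cases hid : i < lam.frobDiag
      · have := hA i hid
        by_cases hjd : j < lam.frobDiag
        · exact lam.shifted_strictAnti.injective (by simp only [shifted]; omega)
        · omega
      · by_cases hjd : j < lam.frobDiag
        · have := hA j hjd
          omega
        · exact lam.shifted_strictAnti.injective (by simp only [shifted]; omega)
  · rintro ⟨hmaps, hinj⟩
    have hsurj := ((Set.finite_Iio _).injOn_iff_bijOn_of_mapsTo hmaps).mp hinj |>.surjOn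
    let u : Fin lam.frobDiag → ℤ := fun k => lam.shifted k
    let v : Fin lam.frobDiag → ℤ := fun k => (lam.conj k : ℤ) - k - 1
    have hu : StrictAnti u := fun _ _ h => lam.shifted_strictAnti h
    have hv : StrictAnti v := fun k k' h => by
      have := lam.conj_antitone (Fin.le_iff_val_le_val.mp h.le)
      simp only [v]
      omega
    have hvu : Set.range v ⊆ Set.range u := by
      rintro _ ⟨k, rfl⟩
      have hk : k.val < lam.conj k := lam.lt_conj_iff.mpr (lam.lt_frobDiag_iff.mp k.isLt)
      obtain ⟨i, hi, hik⟩ := hsurj (show (lam.conj k - (k + 1) : ℕ) < lam.len by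
        have := lam.conj_le_len k; omega)
      have := hd i; have := hhook i k
      simp only [shifted] at hik
      have hid : i < lam.frobDiag := by omega
      refine ⟨⟨i, hid⟩, ?_⟩
      simp only [u, v, shifted]
      omega
    intro k hk
    have := congrFun (hu.eq_of_range_subset hv hvu) ⟨k, hk⟩
    simp only [u, v, shifted] at this
    omega

variable {lam}

theorem size_eq_two_mul_of_inA (hA : lam.InA) :
    lam.size = 2 * ∑ i ∈ Finset.range lam.len, (lam.f i - i) := by
  rw [size_eq_sum_arm_add_sum_leg, two_mul]
  congr 1
  refine Finset.sum_congr rfl fun k _ => ?_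
  by_cases hk : k < lam.frobDiag
  · rw [hA k hk]
    omega
  · have := lam.conj_le_of_frobDiag_le (not_lt.mp hk)
    have := mt lam.lt_frobDiag_iff.mpr hk
    omega

theorem exists_perm_natAbs_shifted (hA : lam.InA) :
    ∃ σ : Equiv.Perm (Fin lam.len), ∀ i, (σ i : ℕ) = (lam.shifted i).natAbs := by
  obtain ⟨hmaps, hinj⟩ := lam.inA_iff_mapsTo_injOn.mp hA
  let σ₀ : Fin lam.len → Fin lam.len := fun i => ⟨(lam.shifted i).natAbs, hmaps i.isLt⟩
  have hσ₀ : σ₀.Injective := fun i j h => Fin.ext (hinj i.isLt j.isLt (congrArg Fin.val h))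
  exact ⟨Equiv.ofBijective σ₀ (Finite.injective_iff_bijective.mp hσ₀), fun _ => rfl⟩

theorem sign_eq_of_natAbs_shifted {σ : Equiv.Perm (Fin lam.len)}
    (hσ : ∀ i, (σ i : ℕ) = (lam.shifted i).natAbs) :
    Equiv.Perm.sign σ = (-1) ^ ∑ i ∈ Finset.range lam.len, (lam.f i - i) := by
  have hd i := lam.lt_frobDiag_iff (i := i)
  rw [σ.sign_eq_neg_one_pow_of_strictAntiOn_of_strictMonoOn (d := lam.frobDiag)]
  · rw [Finset.sum_filter, ← Fin.sum_univ_eq_sum_range (fun i => lam.f i - i)]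
    congr 1
    refine Finset.sum_congr rfl fun i _ => ?_
    have := hd i
    rw [hσ, shifted]
    split_ifs <;> omega
  · intro i (hi : (i : ℕ) < _) j (hj : (j : ℕ) < _) hij
    have := hd i; have := hd j; have := lam.shifted_strictAnti hij
    simp only [Fin.lt_def, hσ, shifted] at this ⊢
    omega
  · intro i (hi : _ ≤ (i : ℕ)) j (hj : _ ≤ (j : ℕ)) hij
    have := hd i; have := hd j; have := lam.shifted_strictAnti hij
    simp only [Fin.lt_def, hσ, shifted] at this ⊢
    omega

end Partn

theorem hcf_zero_eq (m : ℕ) : hcf (fun _ => 0) m = if m = 0 then 1 else 0 := by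
  cases m <;> simp [hcf]

theorem hz_zero_eq (k : ℤ) : hz (fun _ => 0) k = if k = 0 then 1 else 0 := by
  rw [hz, hcf_zero_eq]
  split_ifs <;> first | rfl | omega

theorem hz_zero_add_hz_zero_sub (c : ℤ) (j : ℕ) :
    hz (fun _ => 0) (c + j) + hz (fun _ => 0) (c - j) =
      if c.natAbs = j then (if j = 0 then 2 else 1) else 0 := by
  simp only [hz_zero_eq]
  split_ifs <;> first | omega | norm_num

namespace Partn

variable {lam : Partn}

theorem spChar_zero_eq (hn : lam.len ≠ 0) :
    spChar (fun _ => 0) lam = 1 / 2 * (Matrix.of fun i j : Fin lam.len =>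
      if (lam.shifted i).natAbs = j then (if (j : ℕ) = 0 then 2 else 1) else 0).det := by
  rw [spChar, if_neg hn]
  congr 3
  ext i j
  exact hz_zero_add_hz_zero_sub (lam.shifted i) j

theorem spChar_zero_of_inA (hA : lam.InA) :
    spChar (fun _ => 0) lam = (-1) ^ ∑ i ∈ Finset.range lam.len, (lam.f i - i) := by
  rcases eq_or_ne lam.len 0 with hn | hn
  · simp [spChar, hn]
  obtain ⟨σ, hσ⟩ := exists_perm_natAbs_shifted hA
  have hrow (i j : Fin lam.len) : (lam.shifted i).natAbs = j ↔ σ i = j := by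
    rw [Fin.ext_iff, hσ]
  simp only [spChar_zero_eq hn, hrow]
  rw [Matrix.det_of_ite_perm_eq, sign_eq_of_natAbs_shifted hσ,
    Fin.prod_univ_eq_prod_range (fun j => if j = 0 then (2 : ℂ) else 1), Finset.prod_ite_eq',
    if_pos (Finset.mem_range.mpr (Nat.pos_of_ne_zero hn))]
  push_cast
  ring

theorem spChar_zero_of_not_inA (hA : ¬lam.InA) : spChar (fun _ => 0) lam = 0 := by
  have hn : lam.len ≠ 0 := fun hn =>
    hA fun i (hi : i < lam.frobDiag) => absurd (hi.trans_le lam.frobDiag_le_len) (by omega)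
  rw [spChar_zero_eq hn, mul_eq_zero]
  right
  rw [inA_iff_mapsTo_injOn, not_and_or] at hA
  simp only [Set.MapsTo, Set.InjOn, Set.mem_Iio, not_forall, not_lt] at hA
  rcases hA with ⟨i, hi, hout⟩ | ⟨i, hi, j, hj, hij, hne⟩
  · exact Matrix.det_eq_zero_of_row_eq_zero ⟨i, hi⟩ fun k => if_neg (k.isLt.trans_le hout).ne'
  · refine Matrix.det_zero_of_row_eq (i := ⟨i, hi⟩) (j := ⟨j, hj⟩) (by simpa using hne) ?_
    ext k
    simp [hij]

end Partn

/-- At the empty specialization (`p_k = 0` for all `k`), `sp_λ(0) = (−1)^{|λ|/2}` for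
`λ ∈ A` (and `|λ|` is then even), and `sp_λ(0) = 0` otherwise. -/
theorem sp_at_empty_specialization (lam : Partn) :
    (lam.InA → Even lam.size ∧ spChar (fun _ => 0) lam = (-1 : ℂ) ^ (lam.size / 2)) ∧
    (¬ lam.InA → spChar (fun _ => 0) lam = 0) := by
  refine ⟨fun hA => ?_, Partn.spChar_zero_of_not_inA⟩
  rw [Partn.spChar_zero_of_inA hA, Partn.size_eq_two_mul_of_inA hA,
    Nat.mul_div_cancel_left _ two_pos]
  exact ⟨even_two_mul _, rfl⟩
end
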